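/- Let ω > 0, u₀ > 0, u₁ ≠ 0, set V(t) = u₁ t + u₀, and let J be the interval of times t with V(t) > 0. Let (x, p) : J → ℝ² be a differentiable solution of x'(t) = p(t), p'(t) = −(ω²/V(t)⁴) x(t), and suppose V(t) p(t) − u₁ x(t) > 0 for all t ∈ J. Let I₁ denote the (constant, by the first-integral property) value of (ω x/V)² + (V p − u₁ x)², and assume I₁ > 0. Then the function I₂(t) = arcsin( ω x(t) / (V(t) √I₁) ) + ω/(u₁ V(t)) is constant on J. -/

import Mathlib

/-! With `D = V x' - V' x` and `I = (ω x / V)² + D²`, the quotient `u = ω x / (V √I)` satisfies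
`u' = ω D / (V² √I)` and `√(1 - u²) = D / √I` (this is where `D > 0` enters), so
`(arcsin u)' = ω / V²`. When `V' = u₁` is constant, `(ω / (u₁ V))' = -ω / V²` cancels it, and
`I₂` is constant on the interval `J`. -/

open Real

theorem convex_setOf_pos_mul_add (a b : ℝ) : Convex ℝ {t : ℝ | 0 < a * t + b} := by
  simpa [Set.preimage] using
    (convex_Ioi (0 : ℝ)).affine_preimage (a • AffineMap.id ℝ ℝ + AffineMap.const ℝ ℝ b)

theorem isOpen_setOf_pos_mul_add (a b : ℝ) : IsOpen {t : ℝ | 0 < a * t + b} :=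
  isOpen_lt continuous_const (by fun_prop)

theorem hasDerivAt_arcsin_mul_div_mul_sqrt {x V : ℝ → ℝ} {x' a ω I t : ℝ}
    (hx : HasDerivAt x x' t) (hV : HasDerivAt V a t) (hVt : V t ≠ 0)
    (hD : 0 < V t * x' - a * x t)
    (hI : (ω * x t / V t) ^ 2 + (V t * x' - a * x t) ^ 2 = I) :
    HasDerivAt (fun τ => arcsin (ω * x τ / (V τ * √I))) (ω / V t ^ 2) t := by
  set D := V t * x' - a * x t
  set u := ω * x t / (V t * √I)
  have hI_pos : 0 < I := hI ▸ by positivity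
  have hsqrtI : 0 < √I := sqrt_pos.mpr hI_pos
  have hsqrtI_sq : √I ^ 2 = I := sq_sqrt hI_pos.le
  have hu : 1 - u ^ 2 = (D / √I) ^ 2 := by
    simp only [u, div_pow, mul_pow, hsqrtI_sq]
    rw [← hI]
    field_simp
    ring
  have hu_abs : |u| < 1 := by
    rw [← sq_lt_one_iff_abs_lt_one]
    nlinarith [sq_nonneg (D / √I), div_pos hD hsqrtI]
  have hinner : HasDerivAt (fun τ => ω * x τ / (V τ * √I)) (ω * D / (V t ^ 2 * √I)) t := by
    refine ((hx.const_mul ω).div (hV.mul_const √I) (by positivity)).congr_deriv ?_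
    field_simp
    ring
  refine ((hasDerivAt_arcsin (abs_lt.mp hu_abs).1.ne' (abs_lt.mp hu_abs).2.ne).comp t
    hinner).congr_deriv ?_
  rw [hu, sqrt_sq (div_pos hD hsqrtI).le]
  field_simp

theorem HasDerivAt.const_div_const_mul {V : ℝ → ℝ} {a t : ℝ} (ω : ℝ) (ha : a ≠ 0)
    (hV : HasDerivAt V a t) (hVt : V t ≠ 0) :
    HasDerivAt (fun τ => ω / (a * V τ)) (-(ω / V t ^ 2)) t := by
  refine ((hasDerivAt_const t ω).div (hV.const_mul a) (mul_ne_zero ha hVt)).congr_deriv ?_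
  field_simp
  ring

theorem first_integral_I2_inverse_quartic_general
    (ω u₀ u₁ : ℝ) (hu₁ : u₁ ≠ 0)
    (V : ℝ → ℝ) (hV : ∀ t, V t = u₁ * t + u₀)
    (J : Set ℝ) (hJ : J = {t : ℝ | 0 < V t})
    (x p : ℝ → ℝ)
    (hx : ∀ t ∈ J, HasDerivAt x (p t) t)
    (hpos : ∀ t ∈ J, 0 < V t * p t - u₁ * x t)
    (I₁ : ℝ)
    (hI₁ : ∀ t ∈ J, (ω * x t / V t) ^ 2 + (V t * p t - u₁ * x t) ^ 2 = I₁) :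
    ∀ t ∈ J, ∀ s ∈ J,
      Real.arcsin (ω * x t / (V t * Real.sqrt I₁)) + ω / (u₁ * V t) =
        Real.arcsin (ω * x s / (V s * Real.sqrt I₁)) + ω / (u₁ * V s) := by
  have hJ_eq : J = {t : ℝ | 0 < u₁ * t + u₀} := by simp only [hJ, hV]
  have hV_deriv (t : ℝ) : HasDerivAt V u₁ t := by
    simpa [funext hV] using ((hasDerivAt_id t).const_mul u₁).add_const u₀
  have hI₂_deriv : ∀ t ∈ J, HasDerivAt
      (fun τ => arcsin (ω * x τ / (V τ * √I₁)) + ω / (u₁ * V τ)) 0 t := by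
    intro t ht
    have hVt : V t ≠ 0 := (show 0 < V t by rwa [hJ] at ht).ne'
    exact ((hasDerivAt_arcsin_mul_div_mul_sqrt (hx t ht) (hV_deriv t) hVt (hpos t ht)
      (hI₁ t ht)).add ((hV_deriv t).const_div_const_mul ω hu₁ hVt)).congr_deriv (add_neg_cancel _)
  intro t ht s hs
  rw [hJ_eq] at hI₂_deriv ht hs
  exact (isOpen_setOf_pos_mul_add u₁ u₀).is_const_of_deriv_eq_zero
    (convex_setOf_pos_mul_add u₁ u₀).isPreconnected
    (fun τ hτ => (hI₂_deriv τ hτ).differentiableAt.differentiableWithinAt)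
    (fun τ hτ => (hI₂_deriv τ hτ).deriv) ht hs

/-- With `ω > 0`, `u₀ > 0`, `u₁ ≠ 0`, `V(t) = u₁t + u₀`,
`J = {t | V(t) > 0}`, for a solution of `x' = p`, `p' = −(ω²/V⁴)x` on `J` with
`Vp − u₁x > 0` on `J` and constant first-integral value `I₁ > 0` of
`(ωx/V)² + (Vp − u₁x)²`, the function
`I₂(t) = arcsin(ωx/(V√I₁)) + ω/(u₁V)` is constant on `J`. -/
theorem first_integral_I2_inverse_quartic
    (ω u₀ u₁ : ℝ) (hω : 0 < ω) (hu₀ : 0 < u₀) (hu₁ : u₁ ≠ 0)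
    (V : ℝ → ℝ) (hV : ∀ t, V t = u₁ * t + u₀)
    (J : Set ℝ) (hJ : J = {t : ℝ | 0 < V t})
    (x p : ℝ → ℝ)
    (hx : ∀ t ∈ J, HasDerivAt x (p t) t)
    (hp : ∀ t ∈ J, HasDerivAt p (-(ω ^ 2 / (V t) ^ 4) * x t) t)
    (hpos : ∀ t ∈ J, 0 < V t * p t - u₁ * x t)
    (I₁ : ℝ) (hI₁pos : 0 < I₁)
    (hI₁ : ∀ t ∈ J, (ω * x t / V t) ^ 2 + (V t * p t - u₁ * x t) ^ 2 = I₁) :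
    ∀ t ∈ J, ∀ s ∈ J,
      Real.arcsin (ω * x t / (V t * Real.sqrt I₁)) + ω / (u₁ * V t) =
        Real.arcsin (ω * x s / (V s * Real.sqrt I₁)) + ω / (u₁ * V s) :=
  first_integral_I2_inverse_quartic_general ω u₀ u₁ hu₁ V hV J hJ x p hx hpos I₁ hI₁
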